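/- For probability measures μ, ν on ℝ^d with finite p-th moments, the function v ↦ W_p(μ_v, ν_v) on the unit sphere is Lipschitz with constant M_p(μ) + M_p(ν); in particular, since the sphere is compact, the supremum sup_{v ∈ S^{d-1}} W_p(μ_v, ν_v) is attained. -/

import Mathlib

/-!
Under `μ`, the pair `(⟪u, x⟫, ⟪v, x⟫)` couples `μ_u` with `μ_v` at `Lᵖ`-cost at most
`‖u - v‖ M_p(μ)`, because `|⟪u - v, x⟫| ≤ ‖u - v‖ ‖x‖`. Gluing this coupling, an arbitrary coupling
of `μ_u` with `ν_u`, and the analogous coupling of `ν_u` with `ν_v` (by disintegration) produces a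
coupling of `μ_v` with `ν_v` whose cost is at most the sum of the three costs, by Minkowski's
inequality. Taking the infimum over couplings gives
`W_p(μ_v, ν_v) ≤ W_p(μ_u, ν_u) + (M_p(μ) + M_p(ν)) ‖u - v‖`, and the maximum on the sphere exists by
compactness.

Costs are compared as `eLpNorm`s in `ℝ≥0∞`, where Minkowski's inequality needs no integrability;
the finite moments only enter when passing back to `ℝ`.
-/

open MeasureTheory

/-- The `p`-Wasserstein distance, defined as the infimum over couplings. -/
noncomputable def wassersteinDist {X : Type*} [MeasurableSpace X] [PseudoMetricSpace X]
    (p : ℝ) (μ ν : Measure X) : ℝ :=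
  ⨅ γ : {γ : Measure (X × X) // γ.map Prod.fst = μ ∧ γ.map Prod.snd = ν},
    (∫ q, dist q.1 q.2 ^ p ∂(γ : Measure (X × X))) ^ (1 / p)

/-- Pushforward of a measure on `ℝ^d` under the projection `x ↦ ⟨v, x⟩`. -/
noncomputable def projMeasure {d : ℕ} (v : EuclideanSpace ℝ (Fin d))
    (μ : Measure (EuclideanSpace ℝ (Fin d))) : Measure ℝ :=
  μ.map (fun x => (inner ℝ v x : ℝ))

open ProbabilityTheory
open scoped ENNReal

theorem exists_gluing {X Y Z : Type*} [MeasurableSpace X] [MeasurableSpace Y] [MeasurableSpace Z]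
    [StandardBorelSpace Z] [Nonempty Z]
    (γ₁ : Measure (X × Y)) (γ₂ : Measure (Y × Z)) [SFinite γ₁] [IsFiniteMeasure γ₂]
    (h : γ₁.snd = γ₂.fst) :
    ∃ τ : Measure ((X × Y) × Z), τ.fst = γ₁ ∧ τ.map (fun q => (q.1.2, q.2)) = γ₂ := by
  refine ⟨γ₁ ⊗ₘ Kernel.prodMkLeft X γ₂.condKernel, Measure.fst_compProd _ _, ?_⟩
  have hm : Measurable fun q : (X × Y) × Z => (q.1.2, q.2) := by fun_prop
  ext s hs
  rw [Measure.map_apply hm hs, Measure.compProd_apply (hm hs)]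
  conv_rhs => rw [← γ₂.disintegrate γ₂.condKernel, Measure.compProd_apply hs, ← h, Measure.snd,
    lintegral_map (Kernel.measurable_kernel_prodMk_left hs) measurable_snd]
  rfl

theorem isFiniteMeasure_of_fst_eq {X Y : Type*} [MeasurableSpace X] [MeasurableSpace Y]
    {γ : Measure (X × Y)} {μ : Measure X} [IsFiniteMeasure μ] (h : γ.fst = μ) :
    IsFiniteMeasure γ :=
  have : IsFiniteMeasure (γ.map Prod.fst) := by rw [← Measure.fst, h]; infer_instance
  Measure.isFiniteMeasure_of_map measurable_fst.aemeasurable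

theorem integral_norm_rpow_rpow_eq_toReal_eLpNorm {α F : Type*} [MeasurableSpace α]
    [NormedAddCommGroup F] {μ : Measure α} {f : α → F} {p : ℝ} (hp : 0 < p)
    (hf : AEStronglyMeasurable f μ) :
    (∫ x, ‖f x‖ ^ p ∂μ) ^ (1 / p) = (eLpNorm f (ENNReal.ofReal p) μ).toReal := by
  rw [toReal_eLpNorm hf, lpNorm_eq_integral_norm_rpow_toReal (by simpa using hp)
    ENNReal.ofReal_ne_top hf, ENNReal.toReal_ofReal hp.le, one_div]

theorem eLpNorm_dist_lt_top {F : Type*} [NormedAddCommGroup F] [MeasurableSpace F] [BorelSpace F]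
    [SecondCountableTopology F] {γ : Measure (F × F)} {p : ℝ≥0∞}
    (h₁ : MemLp id p γ.fst) (h₂ : MemLp id p γ.snd) :
    eLpNorm (fun q => dist q.1 q.2) p γ < ∞ := by
  have hfst : MemLp Prod.fst p γ :=
    (memLp_map_measure_iff aestronglyMeasurable_id measurable_fst.aemeasurable).1 h₁
  have hsnd : MemLp Prod.snd p γ :=
    (memLp_map_measure_iff aestronglyMeasurable_id measurable_snd.aemeasurable).1 h₂
  simp_rw [dist_eq_norm]
  rw [eLpNorm_norm]
  exact (hfst.sub hsnd).eLpNorm_lt_top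

section Coupling

variable {X : Type*} [PseudoMetricSpace X] [MeasurableSpace X]

theorem wassersteinDist_le_of_coupling {p : ℝ} {μ ν : Measure X} (γ : Measure (X × X))
    (h₁ : γ.fst = μ) (h₂ : γ.snd = ν) :
    wassersteinDist p μ ν ≤ (∫ q, dist q.1 q.2 ^ p ∂γ) ^ (1 / p) := by
  refine ciInf_le ⟨0, Set.forall_mem_range.2 fun _ => ?_⟩
    (⟨γ, h₁, h₂⟩ : {γ : Measure (X × X) // γ.map Prod.fst = μ ∧ γ.map Prod.snd = ν})
  exact Real.rpow_nonneg (integral_nonneg fun _ => Real.rpow_nonneg dist_nonneg _) _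

theorem le_wassersteinDist {p a : ℝ} {μ ν : Measure X} [IsProbabilityMeasure μ]
    [IsProbabilityMeasure ν]
    (h : ∀ γ : Measure (X × X), γ.fst = μ → γ.snd = ν → a ≤ (∫ q, dist q.1 q.2 ^ p ∂γ) ^ (1 / p)) :
    a ≤ wassersteinDist p μ ν :=
  have : Nonempty {γ : Measure (X × X) // γ.map Prod.fst = μ ∧ γ.map Prod.snd = ν} :=
    ⟨⟨μ.prod ν, Measure.fst_prod, Measure.snd_prod⟩⟩
  le_ciInf fun γ => h γ.1 γ.2.1 γ.2.2

variable [BorelSpace X] [SecondCountableTopology X]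

theorem integral_dist_rpow_rpow_eq_toReal_eLpNorm {p : ℝ} (hp : 0 < p) (γ : Measure (X × X)) :
    (∫ q, dist q.1 q.2 ^ p ∂γ) ^ (1 / p) =
      (eLpNorm (fun q => dist q.1 q.2) (ENNReal.ofReal p) γ).toReal := by
  simpa [Real.norm_of_nonneg dist_nonneg] using
    integral_norm_rpow_rpow_eq_toReal_eLpNorm hp (f := fun q : X × X => dist q.1 q.2) (μ := γ)
      (by fun_prop)

theorem exists_coupling_eLpNorm_dist_le_add [StandardBorelSpace X] [Nonempty X]
    {p : ℝ≥0∞} (hp : 1 ≤ p)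
    (γ₁ γ₂ : Measure (X × X)) [SFinite γ₁] [IsFiniteMeasure γ₂] (h : γ₁.snd = γ₂.fst) :
    ∃ γ : Measure (X × X), γ.fst = γ₁.fst ∧ γ.snd = γ₂.snd ∧
      eLpNorm (fun q => dist q.1 q.2) p γ ≤
        eLpNorm (fun q => dist q.1 q.2) p γ₁ + eLpNorm (fun q => dist q.1 q.2) p γ₂ := by
  obtain ⟨τ, hτ₁, hτ₂⟩ := exists_gluing γ₁ γ₂ h
  have hdist : Measurable fun q : X × X => dist q.1 q.2 := by fun_prop
  refine ⟨τ.map fun q => (q.1.1, q.2), ?_, ?_, ?_⟩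
  · rw [Measure.fst_map_prodMk (by fun_prop), ← hτ₁, Measure.fst, Measure.fst,
      Measure.map_map measurable_fst measurable_fst]
    rfl
  · rw [Measure.snd_map_prodMk (by fun_prop), ← hτ₂, Measure.snd_map_prodMk (by fun_prop)]
  calc eLpNorm (fun q => dist q.1 q.2) p (τ.map fun q => (q.1.1, q.2))
      = eLpNorm (fun q : (X × X) × X => dist q.1.1 q.2) p τ :=
        eLpNorm_map_measure hdist.aestronglyMeasurable (by fun_prop)
    _ ≤ eLpNorm ((fun q : (X × X) × X => dist q.1.1 q.1.2) + fun q => dist q.1.2 q.2) p τ :=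
        eLpNorm_mono_real fun q => by
          rw [Real.norm_of_nonneg dist_nonneg]; exact dist_triangle _ _ _
    _ ≤ _ := eLpNorm_add_le (by fun_prop) (by fun_prop) hp
    _ = _ := by
        rw [← hτ₁, ← hτ₂, Measure.fst, eLpNorm_map_measure hdist.aestronglyMeasurable (by fun_prop),
          eLpNorm_map_measure hdist.aestronglyMeasurable (by fun_prop)]
        rfl

end Coupling

section Euclidean

variable {d : ℕ}

local notation "E" => EuclideanSpace ℝ (Fin d)

instance (v : E) (μ : Measure E) [IsFiniteMeasure μ] : IsFiniteMeasure (projMeasure v μ) :=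
  Measure.isFiniteMeasure_map μ _

instance (v : E) (μ : Measure E) [IsProbabilityMeasure μ] :
    IsProbabilityMeasure (projMeasure v μ) :=
  Measure.isProbabilityMeasure_map (by fun_prop)

theorem memLp_id_projMeasure {μ : Measure E} {p : ℝ≥0∞} (hμ : MemLp id p μ) (u : E) :
    MemLp id p (projMeasure u μ) :=
  (memLp_map_measure_iff aestronglyMeasurable_id (by fun_prop)).2 ((innerSL ℝ u).comp_memLp' hμ)

theorem exists_coupling_projMeasure_eLpNorm_dist_le (μ : Measure E) (u v : E) (p : ℝ≥0∞) :
    ∃ γ : Measure (ℝ × ℝ), γ.fst = projMeasure u μ ∧ γ.snd = projMeasure v μ ∧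
      eLpNorm (fun q => dist q.1 q.2) p γ ≤ ‖u - v‖ₑ * eLpNorm id p μ := by
  have hm : Measurable fun x : E => (inner ℝ u x, inner ℝ v x) := by fun_prop
  refine ⟨μ.map fun x => (inner ℝ u x, inner ℝ v x), Measure.fst_map_prodMk (by fun_prop),
    Measure.snd_map_prodMk (by fun_prop), ?_⟩
  rw [eLpNorm_map_measure (by fun_prop) hm.aemeasurable]
  refine eLpNorm_le_nnreal_smul_eLpNorm_of_ae_le_mul (ae_of_all _ fun x => ?_) p
  rw [← NNReal.coe_le_coe, NNReal.coe_mul, coe_nnnorm, coe_nnnorm, coe_nnnorm, Function.comp_apply,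
    Real.norm_of_nonneg dist_nonneg, Real.dist_eq, ← inner_sub_left, id]
  exact abs_real_inner_le_norm _ _

theorem exists_coupling_projMeasure_eLpNorm_dist_le_add (μ ν : Measure E)
    [IsFiniteMeasure μ] [IsFiniteMeasure ν] {p : ℝ≥0∞} (hp : 1 ≤ p) (u v : E)
    (γ : Measure (ℝ × ℝ)) (hγ₁ : γ.fst = projMeasure u μ) (hγ₂ : γ.snd = projMeasure u ν) :
    ∃ π : Measure (ℝ × ℝ), π.fst = projMeasure v μ ∧ π.snd = projMeasure v ν ∧
      eLpNorm (fun q => dist q.1 q.2) p π ≤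
        ‖u - v‖ₑ * eLpNorm id p μ + eLpNorm (fun q => dist q.1 q.2) p γ +
          ‖u - v‖ₑ * eLpNorm id p ν := by
  obtain ⟨α, hα₁, hα₂, hα⟩ := exists_coupling_projMeasure_eLpNorm_dist_le μ v u p
  obtain ⟨β, hβ₁, hβ₂, hβ⟩ := exists_coupling_projMeasure_eLpNorm_dist_le ν u v p
  have := isFiniteMeasure_of_fst_eq hα₁
  have := isFiniteMeasure_of_fst_eq hγ₁
  have := isFiniteMeasure_of_fst_eq hβ₁
  obtain ⟨π₁, hπ₁fst, hπ₁snd, hπ₁⟩ :=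
    exists_coupling_eLpNorm_dist_le_add hp α γ (hα₂.trans hγ₁.symm)
  have := isFiniteMeasure_of_fst_eq (hπ₁fst.trans hα₁)
  obtain ⟨π, hπfst, hπsnd, hπ⟩ :=
    exists_coupling_eLpNorm_dist_le_add hp π₁ β (hπ₁snd.trans (hγ₂.trans hβ₁.symm))
  refine ⟨π, hπfst.trans (hπ₁fst.trans hα₁), hπsnd.trans hβ₂, ?_⟩
  rw [enorm_sub_rev] at hα
  exact hπ.trans (add_le_add (hπ₁.trans (add_le_add hα le_rfl)) hβ)

theorem wassersteinDist_projMeasure_le_add (μ ν : Measure E)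
    [IsProbabilityMeasure μ] [IsProbabilityMeasure ν] {p : ℝ} (hp : 1 ≤ p)
    (hμ : MemLp id (ENNReal.ofReal p) μ) (hν : MemLp id (ENNReal.ofReal p) ν) (u v : E) :
    wassersteinDist p (projMeasure v μ) (projMeasure v ν) ≤
      wassersteinDist p (projMeasure u μ) (projMeasure u ν) +
        ((∫ x, ‖x‖ ^ p ∂μ) ^ (1 / p) + (∫ x, ‖x‖ ^ p ∂ν) ^ (1 / p)) * ‖u - v‖ := by
  have hp₀ : 0 < p := one_pos.trans_le hp
  have hp' : 1 ≤ ENNReal.ofReal p := by simpa using hp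
  have hmoment (m : Measure E) : (∫ x, ‖x‖ ^ p ∂m) ^ (1 / p) = (eLpNorm id (.ofReal p) m).toReal :=
    integral_norm_rpow_rpow_eq_toReal_eLpNorm hp₀ aestronglyMeasurable_id
  rw [hmoment, hmoment, ← sub_le_iff_le_add]
  refine le_wassersteinDist fun γ hγ₁ hγ₂ => ?_
  obtain ⟨π, hπ₁, hπ₂, hπ⟩ :=
    exists_coupling_projMeasure_eLpNorm_dist_le_add μ ν hp' u v γ hγ₁ hγ₂
  have hγ : eLpNorm (fun q => dist q.1 q.2) (.ofReal p) γ < ∞ :=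
    eLpNorm_dist_lt_top (hγ₁ ▸ memLp_id_projMeasure hμ u) (hγ₂ ▸ memLp_id_projMeasure hν u)
  rw [sub_le_iff_le_add, integral_dist_rpow_rpow_eq_toReal_eLpNorm hp₀]
  calc wassersteinDist p (projMeasure v μ) (projMeasure v ν)
      ≤ (∫ q, dist q.1 q.2 ^ p ∂π) ^ (1 / p) := wassersteinDist_le_of_coupling π hπ₁ hπ₂
    _ = (eLpNorm (fun q => dist q.1 q.2) (.ofReal p) π).toReal :=
        integral_dist_rpow_rpow_eq_toReal_eLpNorm hp₀ π
    _ ≤ _ := ENNReal.toReal_mono (by finiteness) hπ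
    _ = _ := by
        rw [ENNReal.toReal_add (by finiteness) (by finiteness),
          ENNReal.toReal_add (by finiteness) (by finiteness), ENNReal.toReal_mul,
          ENNReal.toReal_mul, toReal_enorm]
        ring

theorem abs_sub_wassersteinDist_projMeasure_le (μ ν : Measure E)
    [IsProbabilityMeasure μ] [IsProbabilityMeasure ν] {p : ℝ} (hp : 1 ≤ p)
    (hμ : MemLp id (ENNReal.ofReal p) μ) (hν : MemLp id (ENNReal.ofReal p) ν) (u v : E) :
    |wassersteinDist p (projMeasure u μ) (projMeasure u ν) -
        wassersteinDist p (projMeasure v μ) (projMeasure v ν)| ≤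
      ((∫ x, ‖x‖ ^ p ∂μ) ^ (1 / p) + (∫ x, ‖x‖ ^ p ∂ν) ^ (1 / p)) * ‖u - v‖ := by
  have huv := wassersteinDist_projMeasure_le_add μ ν hp hμ hν u v
  have hvu := wassersteinDist_projMeasure_le_add μ ν hp hμ hν v u
  rw [norm_sub_rev] at hvu
  exact abs_sub_le_iff.2 ⟨by linarith, by linarith⟩

end Euclidean

theorem stmt2 (d : ℕ) (p : ℝ) (hp : 1 ≤ p)
    (μ ν : Measure (EuclideanSpace ℝ (Fin d)))
    [IsProbabilityMeasure μ] [IsProbabilityMeasure ν]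
    (hμ : Integrable (fun x => ‖x‖ ^ p) μ) (hν : Integrable (fun x => ‖x‖ ^ p) ν) :
    (∀ u v : EuclideanSpace ℝ (Fin d), ‖u‖ = 1 → ‖v‖ = 1 →
      |wassersteinDist p (projMeasure u μ) (projMeasure u ν) -
        wassersteinDist p (projMeasure v μ) (projMeasure v ν)| ≤
      ((∫ x, ‖x‖ ^ p ∂μ) ^ (1 / p) + (∫ x, ‖x‖ ^ p ∂ν) ^ (1 / p)) * ‖u - v‖) ∧
    (0 < d → ∃ v₀ : EuclideanSpace ℝ (Fin d), ‖v₀‖ = 1 ∧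
      ∀ v : EuclideanSpace ℝ (Fin d), ‖v‖ = 1 →
        wassersteinDist p (projMeasure v μ) (projMeasure v ν) ≤
          wassersteinDist p (projMeasure v₀ μ) (projMeasure v₀ ν)) := by
  have hmemLp {m : Measure (EuclideanSpace ℝ (Fin d))} (hm : Integrable (fun x => ‖x‖ ^ p) m) :
      MemLp id (ENNReal.ofReal p) m :=
    (integrable_norm_rpow_iff aestronglyMeasurable_id (by simpa using one_pos.trans_le hp)
      ENNReal.ofReal_ne_top).1 (by simpa [ENNReal.toReal_ofReal (zero_le_one.trans hp)] using hm)
  have hlip := abs_sub_wassersteinDist_projMeasure_le μ ν hp (hmemLp hμ) (hmemLp hν)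
  refine ⟨fun u v _ _ => hlip u v, fun hd => ?_⟩
  have hcont : Continuous fun v => wassersteinDist p (projMeasure v μ) (projMeasure v ν) :=
    (LipschitzWith.of_dist_le' fun u v => by
      rw [Real.dist_eq, dist_eq_norm]; exact hlip u v).continuous
  have : Nonempty (Fin d) := ⟨⟨0, hd⟩⟩
  obtain ⟨v₀, hv₀, hmax⟩ := (isCompact_sphere (0 : EuclideanSpace ℝ (Fin d)) 1).exists_isMaxOn
    (NormedSpace.sphere_nonempty.2 zero_le_one) hcont.continuousOn
  exact ⟨v₀, by simpa using hv₀, fun v hv => hmax (by simpa using hv)⟩
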